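/- arXiv:2002.00159 — 4 statements merged into one kernel-verified Lean document; each statement's English description precedes it below -/
import Mathlib

section
/- Let T > 0. Let α : [0,T] → ℝ be integrable, let β : [0,T] → ℝ be nonnegative and continuous, let u : [0,T] → ℝ be continuous, and let v : [0,T] → ℝ be nonnegative and integrable. If u(s) + ∫₀^s v(t) dt ≤ α(s) + ∫₀^s β(t) u(t) dt for every s ∈ [0,T], then u(s) + ∫₀^s v(t) dt ≤ α(s) + ∫₀^s α(t) β(t) exp(∫_t^s β(r) dr) dt for every s ∈ [0,T]. -/
/-!
Since `∫₀^t v ≥ 0`, the hypothesis gives `u ≤ α + w` with `w(t) = ∫₀^t β u`, hence, as `β ≥ 0`,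
the linear differential inequality `w' = β u ≤ α β + β w`. Multiplying by the integrating factor
`exp (-∫₀^t β)` turns it into `(w · exp (-∫₀^t β))' ≤ α β exp (-∫₀^t β)`; integrating from `0`
(where `w` vanishes) to `s` bounds `w(s)` by `∫₀^s α β exp (∫_t^s β) dt`.
-/

open MeasureTheory Set Real intervalIntegral

section Primitive

variable {E : Type*} [NormedAddCommGroup E] [NormedSpace ℝ E] {f : ℝ → E} {a b : ℝ}

theorem ContinuousOn.continuousOn_primitive_Icc (hab : a ≤ b) (hf : ContinuousOn f (Icc a b)) :
    ContinuousOn (fun x => ∫ r in a..x, f r) (Icc a b) := by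
  simpa only [uIcc_of_le hab] using
    continuousOn_primitive_interval' (hf.intervalIntegrable_of_Icc hab) left_mem_uIcc

theorem ContinuousOn.hasDerivAt_primitive_of_mem_Ioo [CompleteSpace E]
    (hf : ContinuousOn f (Icc a b)) {t : ℝ} (ht : t ∈ Ioo a b) :
    HasDerivAt (fun x => ∫ r in a..x, f r) (f t) t :=
  integral_hasDerivAt_right
    ((hf.mono (Icc_subset_Icc_right ht.2.le)).intervalIntegrable_of_Icc ht.1.le)
    ((hf.mono Ioo_subset_Icc_self).stronglyMeasurableAtFilter isOpen_Ioo t ht)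
    (hf.continuousAt (Icc_mem_nhds ht.1 ht.2))

end Primitive

theorem le_mul_exp_integral_add_integral_of_hasDerivAt_le {w w' β γ : ℝ → ℝ} {a b : ℝ}
    (hab : a ≤ b) (hβ : ContinuousOn β (Icc a b)) (hw : ContinuousOn w (Icc a b))
    (hw' : ∀ t ∈ Ioo a b, HasDerivAt w (w' t) t) (hγ : IntegrableOn γ (Icc a b))
    (hle : ∀ t ∈ Ioo a b, w' t ≤ γ t + β t * w t) :
    w b ≤ w a * exp (∫ r in a..b, β r) + ∫ t in a..b, γ t * exp (∫ r in t..b, β r) := by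
  set B : ℝ → ℝ := fun t => ∫ r in a..t, β r
  have hexpB : ContinuousOn (fun t => exp (-B t)) (Icc a b) :=
    continuous_exp.comp_continuousOn (hβ.continuousOn_primitive_Icc hab).neg
  -- `(w e^{-B})' = (w' - β w) e^{-B} ≤ γ e^{-B}`
  have hweighted : w b * exp (-B b) - w a * exp (-B a) ≤ ∫ t in a..b, γ t * exp (-B t) := by
    refine sub_le_integral_of_hasDeriv_right_of_le (g' := fun t => (w' t - β t * w t) * exp (-B t))
      hab (hw.mul hexpB) (fun t ht => ?_)
      (hγ.mul_continuousOn hexpB isCompact_Icc)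
      (fun t ht => mul_le_mul_of_nonneg_right (by linarith [hle t ht]) (exp_pos _).le)
    have hexpB' := (hβ.hasDerivAt_primitive_of_mem_Ioo ht).neg.exp
    exact ((hw' t ht).mul hexpB').hasDerivWithinAt.congr_deriv
      (by simp only [Pi.neg_apply, B]; ring)
  have hB : ∀ t ∈ Icc a b, exp (B b) * exp (-B t) = exp (∫ r in t..b, β r) := fun t ht => by
    rw [← exp_add, ← integral_interval_sub_left (hβ.intervalIntegrable_of_Icc hab)
      ((hβ.mono (Icc_subset_Icc_right ht.2)).intervalIntegrable_of_Icc ht.1), sub_eq_add_neg]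
  have hB_int : exp (B b) * ∫ t in a..b, γ t * exp (-B t)
      = ∫ t in a..b, γ t * exp (∫ r in t..b, β r) := by
    rw [← intervalIntegral.integral_const_mul]
    refine integral_congr fun t ht => ?_
    rw [uIcc_of_le hab] at ht
    simp only [← hB t ht]
    ring
  have hscaled := mul_le_mul_of_nonneg_left hweighted (exp_pos (B b)).le
  rw [hB_int, mul_sub, mul_left_comm, ← exp_add, add_neg_cancel, exp_zero, mul_one] at hscaled
  simp only [B, integral_same, neg_zero, exp_zero, mul_one] at hscaled
  linarith

theorem modified_gronwall_general
    (T : ℝ)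
    (α β u v : ℝ → ℝ)
    (hα_int : IntegrableOn α (Icc 0 T))
    (hβ_nonneg : ∀ t ∈ Icc (0 : ℝ) T, 0 ≤ β t)
    (hβ_cont : ContinuousOn β (Icc 0 T))
    (hu_cont : ContinuousOn u (Icc 0 T))
    (hv_nonneg : ∀ t ∈ Icc (0 : ℝ) T, 0 ≤ v t)
    (hineq : ∀ s ∈ Icc (0 : ℝ) T,
      u s + ∫ t in (0 : ℝ)..s, v t ≤ α s + ∫ t in (0 : ℝ)..s, β t * u t) :
    ∀ s ∈ Icc (0 : ℝ) T,
      u s + ∫ t in (0 : ℝ)..s, v t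
        ≤ α s + ∫ t in (0 : ℝ)..s, α t * β t * Real.exp (∫ r in t..s, β r) := by
  intro s hs
  have hsub : Icc 0 s ⊆ Icc 0 T := Icc_subset_Icc_right hs.2
  have hβu : ContinuousOn (fun t => β t * u t) (Icc 0 s) := (hβ_cont.mul hu_cont).mono hsub
  have hu_le : ∀ t ∈ Icc 0 s, u t ≤ α t + ∫ r in (0 : ℝ)..t, β r * u r := fun t ht => by
    have hv : 0 ≤ ∫ r in (0 : ℝ)..t, v r :=
      integral_nonneg ht.1 fun r hr => hv_nonneg r ⟨hr.1, hr.2.trans (hsub ht).2⟩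
    linarith [hineq t (hsub ht)]
  have hgronwall := le_mul_exp_integral_add_integral_of_hasDerivAt_le hs.1 (hβ_cont.mono hsub)
    (hβu.continuousOn_primitive_Icc hs.1) (fun t ht => hβu.hasDerivAt_primitive_of_mem_Ioo ht)
    ((hα_int.mono_set hsub).mul_continuousOn (hβ_cont.mono hsub) isCompact_Icc)
    fun t ht => by
      have := mul_le_mul_of_nonneg_left (hu_le t (Ioo_subset_Icc_self ht))
        (hβ_nonneg t (hsub (Ioo_subset_Icc_self ht)))
      linarith
  rw [integral_same, zero_mul, zero_add] at hgronwall
  linarith [hineq s hs]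

/-- Modified Gronwall lemma (Lemma 3.1 of [GL17e]): if
`u(s) + ∫₀^s v ≤ α(s) + ∫₀^s β u` on `[0,T]`, then
`u(s) + ∫₀^s v ≤ α(s) + ∫₀^s α(t) β(t) exp(∫_t^s β) dt`. -/
theorem modified_gronwall
    (T : ℝ) (hT : 0 < T)
    (α β u v : ℝ → ℝ)
    (hα_int : IntegrableOn α (Icc 0 T))
    (hβ_nonneg : ∀ t ∈ Icc (0 : ℝ) T, 0 ≤ β t)
    (hβ_cont : ContinuousOn β (Icc 0 T))
    (hu_cont : ContinuousOn u (Icc 0 T))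
    (hv_nonneg : ∀ t ∈ Icc (0 : ℝ) T, 0 ≤ v t)
    (hv_int : IntegrableOn v (Icc 0 T))
    (hineq : ∀ s ∈ Icc (0 : ℝ) T,
      u s + ∫ t in (0 : ℝ)..s, v t ≤ α s + ∫ t in (0 : ℝ)..s, β t * u t) :
    ∀ s ∈ Icc (0 : ℝ) T,
      u s + ∫ t in (0 : ℝ)..s, v t
        ≤ α s + ∫ t in (0 : ℝ)..s, α t * β t * Real.exp (∫ r in t..s, β r) :=
  modified_gronwall_general T α β u v hα_int hβ_nonneg hβ_cont hu_cont hv_nonneg hineq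
end

section
/- Let T > 0, C₁ > 0 and C̃ > 0. Let Z : [0,T] → ℝ be nonnegative and integrable, and let W : [0,T] → ℝ be absolutely continuous with 0 < W(t) ≤ C̃ for all t ∈ [0,T], satisfying the differential inequality W'(t) ≤ −C₁ Z(t) W(t) ln(W(t)/C̃) for almost every t ∈ [0,T]. Then W(t) ≤ C̃ · (W(0)/C̃)^{exp(−C₁ ∫₀ᵗ Z(s) ds)} for every t ∈ [0,T]. -/
/-!
`V t = log (W t / C̃) * exp (C₁ ∫₀ᵗ Z)` is absolutely continuous: it is built from the
absolutely continuous functions `W` and `∫₀ᵗ Z` by products and by `exp` and `log`, which are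
Lipschitz on the compact (for `log`, positive) ranges involved. Almost everywhere
`V' = exp (C₁ ∫₀ᵗ Z) (W' / W + C₁ Z log (W / C̃)) ≤ 0` by the differential inequality, so the
fundamental theorem of calculus for absolutely continuous functions gives
`V t ≤ V 0 = log (W 0 / C̃)`; exponentiating yields the bound.
-/

open MeasureTheory Set Filter

namespace AbsolutelyContinuousOnInterval

variable {f g : ℝ → ℝ} {a b : ℝ}

theorem congr (hf : AbsolutelyContinuousOnInterval f a b) (hfg : EqOn f g (uIcc a b)) :
    AbsolutelyContinuousOnInterval g a b := by
  refine hf.congr' (eventually_inf_principal.2 (Eventually.of_forall fun E hE => ?_))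
  exact Finset.sum_congr rfl fun i hi => by rw [hfg (hE.1 i hi).1, hfg (hE.1 i hi).2]

theorem _root_.LipschitzOnWith.comp_absolutelyContinuousOnInterval {s : Set ℝ} {K : NNReal}
    (hg : LipschitzOnWith K g s)
    (hf : AbsolutelyContinuousOnInterval f a b) (hfs : MapsTo f (uIcc a b) s) :
    AbsolutelyContinuousOnInterval (g ∘ f) a b := by
  rw [absolutelyContinuousOnInterval_iff] at hf ⊢
  intro ε hε
  obtain ⟨δ, hδ, hfδ⟩ := hf (ε / (K + 1)) (by positivity)
  refine ⟨δ, hδ, fun E hE hEδ => ?_⟩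
  calc ∑ i ∈ Finset.range E.1, dist (g (f (E.2 i).1)) (g (f (E.2 i).2))
      ≤ ∑ i ∈ Finset.range E.1, K * dist (f (E.2 i).1) (f (E.2 i).2) :=
        Finset.sum_le_sum fun i hi =>
          hg.dist_le_mul _ (hfs (hE.1 i hi).1) _ (hfs (hE.1 i hi).2)
    _ = K * ∑ i ∈ Finset.range E.1, dist (f (E.2 i).1) (f (E.2 i).2) := (Finset.mul_sum ..).symm
    _ ≤ K * (ε / (K + 1)) := by gcongr; exact (hfδ E hE hEδ).le
    _ < ε := by rw [mul_div_assoc']; exact (div_lt_iff₀ (by positivity)).2 (by nlinarith)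

theorem comp_contDiffOn (hg : ContDiffOn ℝ 1 g (f '' uIcc a b))
    (hf : AbsolutelyContinuousOnInterval f a b) :
    AbsolutelyContinuousOnInterval (g ∘ f) a b := by
  have himage := hf.continuousOn.image_uIcc
  obtain ⟨K, hK⟩ := hg.exists_lipschitzOnWith one_ne_zero
    (himage ▸ convex_uIcc _ _) (himage ▸ isCompact_uIcc)
  exact hK.comp_absolutelyContinuousOnInterval hf (mapsTo_image f _)

theorem _root_.absolutelyContinuousOnInterval_of_eq_add_intervalIntegral {f' : ℝ → ℝ}
    (hf' : IntervalIntegrable f' volume a b)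
    (hf : ∀ x ∈ uIcc a b, f x = f a + ∫ s in a..x, f' s) :
    AbsolutelyContinuousOnInterval f a b :=
  ((hf'.absolutelyContinuousOnInterval_intervalIntegral left_mem_uIcc).comp_contDiffOn
    (g := fun y => f a + y) (contDiff_const.add contDiff_id).contDiffOn).congr
    fun x hx => (hf x hx).symm

theorem div_const (hf : AbsolutelyContinuousOnInterval f a b) (c : ℝ) :
    AbsolutelyContinuousOnInterval (fun x => f x / c) a b := by
  simpa only [div_eq_inv_mul] using hf.const_mul c⁻¹

theorem exp (hf : AbsolutelyContinuousOnInterval f a b) :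
    AbsolutelyContinuousOnInterval (fun x => Real.exp (f x)) a b :=
  hf.comp_contDiffOn (g := Real.exp) Real.contDiff_exp.contDiffOn

theorem log (hf : AbsolutelyContinuousOnInterval f a b) (hpos : ∀ x ∈ uIcc a b, 0 < f x) :
    AbsolutelyContinuousOnInterval (fun x => Real.log (f x)) a b :=
  hf.comp_contDiffOn (g := Real.log) <| Real.contDiffOn_log.mono <| by
    rintro _ ⟨x, hx, rfl⟩
    exact (hpos x hx).ne'

theorem le_of_ae_deriv_nonpos (hab : a ≤ b) (hf : AbsolutelyContinuousOnInterval f a b)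
    (hf' : ∀ᵐ x ∂volume.restrict (Icc a b), deriv f x ≤ 0) : f b ≤ f a := by
  have hint := intervalIntegral.integral_nonneg_of_ae_restrict hab
    (hf'.mono fun x hx => neg_nonneg.2 hx)
  rw [intervalIntegral.integral_neg, hf.integral_deriv_eq_sub] at hint
  linarith

end AbsolutelyContinuousOnInterval

theorem deriv_log_div_mul_exp_nonpos {W I : ℝ → ℝ} {c C₁ w' z s : ℝ}
    (hW : HasDerivAt W w' s) (hI : HasDerivAt I z s) (hWs : 0 < W s) (hc : c ≠ 0)
    (hineq : w' ≤ -C₁ * z * W s * Real.log (W s / c)) :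
    deriv (fun x => Real.log (W x / c) * Real.exp (C₁ * I x)) s ≤ 0 := by
  have hV := ((hW.div_const c).log (div_ne_zero hWs.ne' hc)).fun_mul
    ((hI.const_mul C₁).exp)
  rw [hV.deriv]
  have hslope : w' / W s ≤ -(C₁ * z * Real.log (W s / c)) := by
    rw [div_le_iff₀ hWs]; linarith
  have hquot : w' / c / (W s / c) = w' / W s := by field_simp
  rw [hquot]
  nlinarith [Real.exp_pos (C₁ * I s)]

theorem le_mul_rpow_of_log_div_mul_exp_le {c w w₀ k : ℝ} (hc : 0 < c) (hw : 0 < w)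
    (hw₀ : 0 < w₀) (h : Real.log (w / c) * Real.exp k ≤ Real.log (w₀ / c)) :
    w ≤ c * (w₀ / c) ^ Real.exp (-k) := by
  have hlog : Real.log (w / c) ≤ Real.log (w₀ / c) * Real.exp (-k) := by
    rwa [Real.exp_neg, ← div_eq_mul_inv, le_div_iff₀ (Real.exp_pos k)]
  calc w = c * Real.exp (Real.log (w / c)) := by
        rw [Real.exp_log (div_pos hw hc)]; field_simp
    _ ≤ c * Real.exp (Real.log (w₀ / c) * Real.exp (-k)) := by gcongr
    _ = c * (w₀ / c) ^ Real.exp (-k) := by rw [Real.rpow_def_of_pos (div_pos hw₀ hc)]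

theorem osgood_logarithmic_gronwall_general
    (T C₁ Ctil : ℝ) (hCtil : 0 < Ctil)
    (Z W W' : ℝ → ℝ)
    (hZ_int : IntegrableOn Z (Icc 0 T))
    (hW'_int : IntegrableOn W' (Icc 0 T))
    (hderiv : ∀ᵐ t ∂(volume.restrict (Icc (0 : ℝ) T)), HasDerivAt W (W' t) t)
    (hFTC : ∀ t ∈ Icc (0 : ℝ) T, W t = W 0 + ∫ s in (0 : ℝ)..t, W' s)
    (hW_pos : ∀ t ∈ Icc (0 : ℝ) T, 0 < W t)
    (hineq : ∀ᵐ t ∂(volume.restrict (Icc (0 : ℝ) T)),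
      W' t ≤ -C₁ * Z t * W t * Real.log (W t / Ctil)) :
    ∀ t ∈ Icc (0 : ℝ) T,
      W t ≤ Ctil * (W 0 / Ctil) ^ Real.exp (-C₁ * ∫ s in (0 : ℝ)..t, Z s) := by
  intro t ht
  have hT : 0 ≤ T := ht.1.trans ht.2
  have hIcc : uIcc 0 T = Icc 0 T := uIcc_of_le hT
  have hZ : IntervalIntegrable Z volume 0 T :=
    (intervalIntegrable_iff_integrableOn_Icc_of_le hT).2 hZ_int
  have hW' : IntervalIntegrable W' volume 0 T :=
    (intervalIntegrable_iff_integrableOn_Icc_of_le hT).2 hW'_int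
  have hW_ac : AbsolutelyContinuousOnInterval W 0 T :=
    absolutelyContinuousOnInterval_of_eq_add_intervalIntegral hW' (hIcc ▸ hFTC)
  set V : ℝ → ℝ := fun x => Real.log (W x / Ctil) * Real.exp (C₁ * ∫ s in (0 : ℝ)..x, Z s)
    with hV
  have hV_ac : AbsolutelyContinuousOnInterval V 0 t :=
    (((hW_ac.div_const Ctil).log fun x hx => div_pos (hW_pos x (hIcc ▸ hx)) hCtil).fun_mul
      ((hZ.absolutelyContinuousOnInterval_intervalIntegral left_mem_uIcc).const_mul C₁).exp
      ).mono (uIcc_subset_uIcc_left (hIcc ▸ ht))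
  have hV' : ∀ᵐ s ∂volume.restrict (Icc 0 T), deriv V s ≤ 0 := by
    have hI := (ae_restrict_iff' measurableSet_Icc).2 (hIcc ▸ hZ.ae_hasDerivAt_integral)
    filter_upwards [hderiv, hineq, hI, ae_restrict_mem measurableSet_Icc] with s hWs hs hIs hsT
    exact deriv_log_div_mul_exp_nonpos hWs (hIs 0 (hIcc ▸ left_mem_Icc.2 hT)) (hW_pos s hsT)
      hCtil.ne' hs
  have hVt := hV_ac.le_of_ae_deriv_nonpos ht.1
    (ae_restrict_of_ae_restrict_of_subset (Icc_subset_Icc_right ht.2) hV')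
  simp only [hV, intervalIntegral.integral_same, mul_zero, Real.exp_zero, mul_one] at hVt
  rw [neg_mul]
  exact le_mul_rpow_of_log_div_mul_exp_le hCtil (hW_pos t ht)
    (hW_pos 0 (hIcc ▸ left_mem_uIcc)) hVt

/-- Osgood-type (logarithmic Gronwall) estimate: if `0 < W ≤ C̃` is absolutely
continuous on `[0,T]` and `W' ≤ -C₁ Z W ln(W/C̃)` a.e. with `Z ≥ 0` integrable,
then `W(t) ≤ C̃ (W(0)/C̃)^{exp(-C₁ ∫₀ᵗ Z)}` (real power `Real.rpow`). -/
theorem osgood_logarithmic_gronwall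
    (T C₁ Ctil : ℝ) (hT : 0 < T) (hC₁ : 0 < C₁) (hCtil : 0 < Ctil)
    (Z W W' : ℝ → ℝ)
    (hZ_nonneg : ∀ t ∈ Icc (0 : ℝ) T, 0 ≤ Z t)
    (hZ_int : IntegrableOn Z (Icc 0 T))
    (hW'_int : IntegrableOn W' (Icc 0 T))
    (hderiv : ∀ᵐ t ∂(volume.restrict (Icc (0 : ℝ) T)), HasDerivAt W (W' t) t)
    (hFTC : ∀ t ∈ Icc (0 : ℝ) T, W t = W 0 + ∫ s in (0 : ℝ)..t, W' s)
    (hW_pos : ∀ t ∈ Icc (0 : ℝ) T, 0 < W t)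
    (hW_le : ∀ t ∈ Icc (0 : ℝ) T, W t ≤ Ctil)
    (hineq : ∀ᵐ t ∂(volume.restrict (Icc (0 : ℝ) T)),
      W' t ≤ -C₁ * Z t * W t * Real.log (W t / Ctil)) :
    ∀ t ∈ Icc (0 : ℝ) T,
      W t ≤ Ctil * (W 0 / Ctil) ^ Real.exp (-C₁ * ∫ s in (0 : ℝ)..t, Z s) :=
  osgood_logarithmic_gronwall_general T C₁ Ctil hCtil Z W W' hZ_int hW'_int hderiv hFTC hW_pos hineq
end

section
/- Assume in addition that Ψ₀'' is nondecreasing on [1−ε₀, 1) and nonincreasing on (−1, −1+ε₀]. Then for every ε ∈ (0, ε₀) and every r ∈ (−1,1), Ψ_{0,ε}(r) ≤ Ψ₀(r). -/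
open Set

/-- The regularized derivative `Ψ'_{0,ε}` of the singular potential: it agrees
with `Ψ₀'` on `[-1+ε, 1-ε]` and is extended linearly outside, matching value
and slope at the matching points. -/
noncomputable def regDeriv (Ψ₀' Ψ₀'' : ℝ → ℝ) (ε : ℝ) (r : ℝ) : ℝ :=
  if r < -1 + ε then Ψ₀' (-1 + ε) + Ψ₀'' (-1 + ε) * (r + 1 - ε)
  else if r ≤ 1 - ε then Ψ₀' r
  else Ψ₀' (1 - ε) + Ψ₀'' (1 - ε) * (r - 1 + ε)

/-- The regularized potential `Ψ_{0,ε}(r) = ∫₀^r Ψ'_{0,ε}(s) ds`. -/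
noncomputable def regPot (Ψ₀' Ψ₀'' : ℝ → ℝ) (ε : ℝ) (r : ℝ) : ℝ :=
  ∫ s in (0 : ℝ)..r, regDeriv Ψ₀' Ψ₀'' ε s

/-- If in addition `Ψ₀''` is nondecreasing on `[1-ε₀, 1)` and nonincreasing on
`(-1, -1+ε₀]`, then the regularized potential lies below the original one on
`(-1,1)`: `Ψ_{0,ε}(r) ≤ Ψ₀(r)` for every `ε ∈ (0, ε₀)` and `r ∈ (-1,1)`. -/
theorem regPot_le_of_monotone_second_derivative
    (θ ε₀ : ℝ) (hθ : 0 < θ) (hε₀ : ε₀ ∈ Ioo (0 : ℝ) 1)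
    (Ψ₀ Ψ₀' Ψ₀'' : ℝ → ℝ)
    (hΨ₀_zero : Ψ₀ 0 = 0)
    (hd1 : ∀ r ∈ Ioo (-1 : ℝ) 1, HasDerivAt Ψ₀ (Ψ₀' r) r)
    (hd2 : ∀ r ∈ Ioo (-1 : ℝ) 1, HasDerivAt Ψ₀' (Ψ₀'' r) r)
    (hcont : ContinuousOn Ψ₀'' (Ioo (-1 : ℝ) 1))
    (hconv : ∀ r ∈ Ioo (-1 : ℝ) 1, θ ≤ Ψ₀'' r)
    (hmono : MonotoneOn Ψ₀'' (Ico (1 - ε₀) 1))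
    (hanti : AntitoneOn Ψ₀'' (Ioc (-1) (-1 + ε₀))) :
    ∀ ε ∈ Ioo (0 : ℝ) ε₀, ∀ r ∈ Ioo (-1 : ℝ) 1,
      regPot Ψ₀' Ψ₀'' ε r ≤ Ψ₀ r := by
  intro ε hε r hr
  obtain ⟨hε0, hεε₀⟩ := hε
  obtain ⟨hr1, hr2⟩ := hr
  have hε₀1 : ε₀ < 1 := hε₀.2
  have hε1 : ε < 1 := lt_trans hεε₀ hε₀1
  have h1ε : (1 - ε : ℝ) ∈ Ioo (-1:ℝ) 1 := ⟨by linarith, by linarith⟩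
  have hm1ε : (-1 + ε : ℝ) ∈ Ioo (-1:ℝ) 1 := ⟨by linarith, by linarith⟩
  have h0mem : (0:ℝ) ∈ Ioo (-1:ℝ) 1 := ⟨by norm_num, by norm_num⟩
  have hrmem : r ∈ Ioo (-1:ℝ) 1 := ⟨hr1, hr2⟩
  have hΨ'cont : ContinuousOn Ψ₀' (Ioo (-1:ℝ) 1) := fun x hx =>
    (hd2 x hx).continuousAt.continuousWithinAt
  have hsub : ∀ {a b : ℝ}, a ∈ Ioo (-1:ℝ) 1 → b ∈ Ioo (-1:ℝ) 1 → uIcc a b ⊆ Ioo (-1:ℝ) 1 :=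
    fun ha hb => Set.ordConnected_Ioo.uIcc_subset ha hb
  have intΨ' : ∀ {a b : ℝ}, a ∈ Ioo (-1:ℝ) 1 → b ∈ Ioo (-1:ℝ) 1 →
      IntervalIntegrable Ψ₀' MeasureTheory.volume a b :=
    fun ha hb => (hΨ'cont.mono (hsub ha hb)).intervalIntegrable
  have fund : ∀ {a b : ℝ}, a ∈ Ioo (-1:ℝ) 1 → b ∈ Ioo (-1:ℝ) 1 →
      ∫ s in a..b, Ψ₀' s = Ψ₀ b - Ψ₀ a := fun ha hb =>
    intervalIntegral.integral_eq_sub_of_hasDerivAt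
      (fun x hx => hd1 x (hsub ha hb hx)) (intΨ' ha hb)
  have eqMid : ∀ s : ℝ, -1 + ε ≤ s → s ≤ 1 - ε → regDeriv Ψ₀' Ψ₀'' ε s = Ψ₀' s := by
    intro s hs1 hs2
    rw [regDeriv, if_neg (not_lt.2 hs1), if_pos hs2]
  have eqRight : ∀ s : ℝ, 1 - ε ≤ s →
      regDeriv Ψ₀' Ψ₀'' ε s = Ψ₀' (1-ε) + Ψ₀'' (1-ε) * (s - 1 + ε) := by
    intro s hs1
    have hne : ¬ s < -1 + ε := not_lt.2 (by linarith)
    rcases eq_or_lt_of_le hs1 with h | h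
    · rw [regDeriv, if_neg hne, if_pos (le_of_eq h.symm), ← h]
      ring
    · rw [regDeriv, if_neg hne, if_neg (not_le.2 h)]
  have eqLeft : ∀ s : ℝ, s ≤ -1 + ε →
      regDeriv Ψ₀' Ψ₀'' ε s = Ψ₀' (-1+ε) + Ψ₀'' (-1+ε) * (s + 1 - ε) := by
    intro s hs1
    rcases lt_or_eq_of_le hs1 with h | h
    · rw [regDeriv, if_pos h]
    · rw [regDeriv, if_neg (not_lt.2 h.ge), if_pos (by linarith : s ≤ 1 - ε), h]
      ring
  have P1 : ∀ s : ℝ, 1 - ε < s → s < 1 →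
      Ψ₀' (1-ε) + Ψ₀'' (1-ε) * (s - 1 + ε) ≤ Ψ₀' s := by
    intro s hs1 hs2
    have hIccsub : Icc (1-ε) s ⊆ Ioo (-1:ℝ) 1 := fun x hx =>
      ⟨by linarith [hx.1], lt_of_le_of_lt hx.2 hs2⟩
    obtain ⟨c, hc, hceq⟩ := exists_hasDerivAt_eq_slope Ψ₀' Ψ₀'' hs1
      (hΨ'cont.mono hIccsub) (fun x hx => hd2 x (hIccsub (Ioo_subset_Icc_self hx)))
    have hpos : (0:ℝ) < s - (1-ε) := by linarith
    have hval : Ψ₀' s - Ψ₀' (1-ε) = Ψ₀'' c * (s - (1-ε)) :=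
      (div_eq_iff hpos.ne').mp hceq.symm
    have hle : Ψ₀'' (1-ε) ≤ Ψ₀'' c :=
      hmono ⟨by linarith, by linarith⟩ ⟨by linarith [hc.1], by linarith [hc.2]⟩ hc.1.le
    nlinarith [mul_le_mul_of_nonneg_right hle hpos.le]
  have P2 : ∀ s : ℝ, -1 < s → s < -1 + ε →
      Ψ₀' s ≤ Ψ₀' (-1+ε) + Ψ₀'' (-1+ε) * (s + 1 - ε) := by
    intro s hs1 hs2
    have hIccsub : Icc s (-1+ε) ⊆ Ioo (-1:ℝ) 1 := fun x hx =>
      ⟨lt_of_lt_of_le hs1 hx.1, by linarith [hx.2]⟩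
    obtain ⟨c, hc, hceq⟩ := exists_hasDerivAt_eq_slope Ψ₀' Ψ₀'' hs2
      (hΨ'cont.mono hIccsub) (fun x hx => hd2 x (hIccsub (Ioo_subset_Icc_self hx)))
    have hpos : (0:ℝ) < (-1+ε) - s := by linarith
    have hval : Ψ₀' (-1+ε) - Ψ₀' s = Ψ₀'' c * ((-1+ε) - s) :=
      (div_eq_iff hpos.ne').mp hceq.symm
    have hle : Ψ₀'' (-1+ε) ≤ Ψ₀'' c :=
      hanti ⟨lt_of_lt_of_le hs1 hc.1.le, by linarith [hc.2]⟩ ⟨by linarith, by linarith⟩ hc.2.le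
    nlinarith [mul_le_mul_of_nonneg_right hle hpos.le]
  rw [regPot]
  rcases le_or_gt 0 r with h0 | h0
  · rcases le_or_gt r (1-ε) with hA | hA
    · have heq : EqOn (regDeriv Ψ₀' Ψ₀'' ε) Ψ₀' (uIcc 0 r) := by
        intro s hs
        rw [uIcc_of_le h0] at hs
        exact eqMid s (by linarith [hs.1]) (le_trans hs.2 hA)
      rw [intervalIntegral.integral_congr heq, fund h0mem hrmem, hΨ₀_zero]
      linarith
    · have heq1 : EqOn (regDeriv Ψ₀' Ψ₀'' ε) Ψ₀' (uIcc 0 (1-ε)) := by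
        intro s hs
        rw [uIcc_of_le (by linarith : (0:ℝ) ≤ 1-ε)] at hs
        exact eqMid s (by linarith [hs.1]) hs.2
      have hgcont : Continuous (fun s : ℝ => Ψ₀' (1-ε) + Ψ₀'' (1-ε) * (s - 1 + ε)) := by
        fun_prop
      have heq2 : EqOn (regDeriv Ψ₀' Ψ₀'' ε)
          (fun s : ℝ => Ψ₀' (1-ε) + Ψ₀'' (1-ε) * (s - 1 + ε)) (uIcc (1-ε) r) := by
        intro s hs
        rw [uIcc_of_le hA.le] at hs
        exact eqRight s hs.1
      have I1 : IntervalIntegrable (regDeriv Ψ₀' Ψ₀'' ε) MeasureTheory.volume 0 (1-ε) :=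
        ((hΨ'cont.mono (hsub h0mem h1ε)).congr heq1).intervalIntegrable
      have I2 : IntervalIntegrable (regDeriv Ψ₀' Ψ₀'' ε) MeasureTheory.volume (1-ε) r :=
        (hgcont.continuousOn.congr heq2).intervalIntegrable
      have hmono' : (∫ s in (1-ε)..r, Ψ₀' (1-ε) + Ψ₀'' (1-ε) * (s - 1 + ε))
          ≤ ∫ s in (1-ε)..r, Ψ₀' s := by
        apply intervalIntegral.integral_mono_on hA.le
          (hgcont.intervalIntegrable _ _) (intΨ' h1ε hrmem)
        intro s hs
        rcases eq_or_lt_of_le hs.1 with h | h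
        · rw [← h]; simp
        · exact P1 s h (lt_of_le_of_lt hs.2 hr2)
      calc (∫ s in (0:ℝ)..r, regDeriv Ψ₀' Ψ₀'' ε s)
          = (∫ s in (0:ℝ)..(1-ε), regDeriv Ψ₀' Ψ₀'' ε s)
            + ∫ s in (1-ε)..r, regDeriv Ψ₀' Ψ₀'' ε s :=
            (intervalIntegral.integral_add_adjacent_intervals I1 I2).symm
        _ = (∫ s in (0:ℝ)..(1-ε), Ψ₀' s)
            + ∫ s in (1-ε)..r, Ψ₀' (1-ε) + Ψ₀'' (1-ε) * (s - 1 + ε) := by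
            rw [intervalIntegral.integral_congr heq1, intervalIntegral.integral_congr heq2]
        _ ≤ (∫ s in (0:ℝ)..(1-ε), Ψ₀' s) + ∫ s in (1-ε)..r, Ψ₀' s := by
            linarith
        _ = Ψ₀ r := by
            rw [fund h0mem h1ε, fund h1ε hrmem, hΨ₀_zero]; ring
  · rcases le_or_gt (-1+ε) r with hA | hA
    · have heq : EqOn (regDeriv Ψ₀' Ψ₀'' ε) Ψ₀' (uIcc 0 r) := by
        intro s hs
        rw [uIcc_comm, uIcc_of_le h0.le] at hs
        exact eqMid s (le_trans hA hs.1) (by linarith [hs.2])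
      rw [intervalIntegral.integral_congr heq, fund h0mem hrmem, hΨ₀_zero]
      linarith
    · have heq1 : EqOn (regDeriv Ψ₀' Ψ₀'' ε) Ψ₀' (uIcc (-1+ε) 0) := by
        intro s hs
        rw [uIcc_of_le (by linarith : (-1+ε:ℝ) ≤ 0)] at hs
        exact eqMid s hs.1 (by linarith [hs.2])
      have hgcont : Continuous (fun s : ℝ => Ψ₀' (-1+ε) + Ψ₀'' (-1+ε) * (s + 1 - ε)) := by
        fun_prop
      have heq2 : EqOn (regDeriv Ψ₀' Ψ₀'' ε)
          (fun s : ℝ => Ψ₀' (-1+ε) + Ψ₀'' (-1+ε) * (s + 1 - ε)) (uIcc r (-1+ε)) := by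
        intro s hs
        rw [uIcc_of_le hA.le] at hs
        exact eqLeft s hs.2
      have I1 : IntervalIntegrable (regDeriv Ψ₀' Ψ₀'' ε) MeasureTheory.volume r (-1+ε) :=
        (hgcont.continuousOn.congr heq2).intervalIntegrable
      have I2 : IntervalIntegrable (regDeriv Ψ₀' Ψ₀'' ε) MeasureTheory.volume (-1+ε) 0 :=
        ((hΨ'cont.mono (hsub hm1ε h0mem)).congr heq1).intervalIntegrable
      have hmono' : (∫ s in r..(-1+ε), Ψ₀' s)
          ≤ ∫ s in r..(-1+ε), Ψ₀' (-1+ε) + Ψ₀'' (-1+ε) * (s + 1 - ε) := by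
        apply intervalIntegral.integral_mono_on hA.le
          (intΨ' hrmem hm1ε) (hgcont.intervalIntegrable _ _)
        intro s hs
        rcases eq_or_lt_of_le hs.2 with h | h
        · rw [h]; simp
        · exact P2 s (lt_of_lt_of_le hr1 hs.1) h
      have hsplit : (∫ s in r..(0:ℝ), regDeriv Ψ₀' Ψ₀'' ε s)
          = (∫ s in r..(-1+ε), regDeriv Ψ₀' Ψ₀'' ε s)
            + ∫ s in (-1+ε)..(0:ℝ), regDeriv Ψ₀' Ψ₀'' ε s :=
        (intervalIntegral.integral_add_adjacent_intervals I1 I2).symm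
      have key : -Ψ₀ r ≤ ∫ s in r..(0:ℝ), regDeriv Ψ₀' Ψ₀'' ε s := by
        have e2 : (∫ s in (-1+ε)..(0:ℝ), regDeriv Ψ₀' Ψ₀'' ε s)
            = ∫ s in (-1+ε)..(0:ℝ), Ψ₀' s := intervalIntegral.integral_congr heq1
        have e1 : (∫ s in r..(-1+ε), regDeriv Ψ₀' Ψ₀'' ε s)
            = ∫ s in r..(-1+ε), Ψ₀' (-1+ε) + Ψ₀'' (-1+ε) * (s + 1 - ε) :=
          intervalIntegral.integral_congr heq2
        have f1 : (∫ s in r..(-1+ε), Ψ₀' s) = Ψ₀ (-1+ε) - Ψ₀ r := fund hrmem hm1ε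
        have f2 : (∫ s in (-1+ε)..(0:ℝ), Ψ₀' s) = Ψ₀ 0 - Ψ₀ (-1+ε) := fund hm1ε h0mem
        rw [hsplit, e1, e2, f2, hΨ₀_zero]
        linarith
      rw [intervalIntegral.integral_symm]
      linarith
end

section
/- There exists a constant L ≥ 0, independent of ε, such that Ψ_{0,ε}(r) ≥ −L for every ε ∈ (0, ε₀) and every r ∈ ℝ; in fact one may take L = (Ψ₀'(0))² / (2θ), i.e. Ψ_{0,ε}(r) ≥ −(Ψ₀'(0))²/(2θ) for all ε ∈ (0, ε₀) and all r ∈ ℝ. -/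
open Set

/-- clamp representation of regDeriv -/
lemma regDeriv_eq_clamp (Ψ₀' Ψ₀'' : ℝ → ℝ) (ε : ℝ) (hε : -1 + ε ≤ 1 - ε) :
    regDeriv Ψ₀' Ψ₀'' ε = fun r =>
      Ψ₀' (max (-1 + ε) (min r (1 - ε))) +
        Ψ₀'' (max (-1 + ε) (min r (1 - ε))) * (r - max (-1 + ε) (min r (1 - ε))) := by
  funext r
  unfold regDeriv
  rcases lt_or_ge r (-1 + ε) with h1 | h1
  · have hmin : min r (1 - ε) ≤ -1 + ε := le_trans (min_le_left _ _) h1.le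
    rw [if_pos h1, max_eq_left hmin]
    ring
  · rw [if_neg (not_lt.mpr h1)]
    rcases le_or_gt r (1 - ε) with h2 | h2
    · rw [if_pos h2, min_eq_left h2, max_eq_right h1]
      ring
    · rw [if_neg (not_le.mpr h2), min_eq_right h2.le,
        max_eq_right hε]
      ring

/-- Uniform lower bound for the regularized potentials: for every
`ε ∈ (0, ε₀)` and every `r ∈ ℝ`,
`Ψ_{0,ε}(r) ≥ -(Ψ₀'(0))² / (2θ)`; in particular the constant
`L = (Ψ₀'(0))² / (2θ) ≥ 0` is independent of `ε`. -/
theorem regPot_uniform_lower_bound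
    (θ ε₀ : ℝ) (hθ : 0 < θ) (hε₀ : ε₀ ∈ Ioo (0 : ℝ) 1)
    (Ψ₀ Ψ₀' Ψ₀'' : ℝ → ℝ)
    (hΨ₀_zero : Ψ₀ 0 = 0)
    (hd1 : ∀ r ∈ Ioo (-1 : ℝ) 1, HasDerivAt Ψ₀ (Ψ₀' r) r)
    (hd2 : ∀ r ∈ Ioo (-1 : ℝ) 1, HasDerivAt Ψ₀' (Ψ₀'' r) r)
    (hcont : ContinuousOn Ψ₀'' (Ioo (-1 : ℝ) 1))
    (hconv : ∀ r ∈ Ioo (-1 : ℝ) 1, θ ≤ Ψ₀'' r) :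
    ∀ ε ∈ Ioo (0 : ℝ) ε₀, ∀ r : ℝ,
      -((Ψ₀' 0) ^ 2 / (2 * θ)) ≤ regPot Ψ₀' Ψ₀'' ε r := by
  rintro ε ⟨hε0, hεε₀⟩ r
  have hε1 : ε < 1 := hεε₀.trans hε₀.2
  have hsub : Icc (-1 + ε) (1 - ε) ⊆ Ioo (-1 : ℝ) 1 := by
    intro x hx
    constructor <;> [linarith [hx.1]; linarith [hx.2]]
  have hIcc : (-1 + ε) ≤ 1 - ε := by linarith
  set g := regDeriv Ψ₀' Ψ₀'' ε with hg
  -- key monotonicity on the middle interval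
  have key : ∀ a ∈ Icc (-1 + ε) (1 - ε), ∀ b ∈ Icc (-1 + ε) (1 - ε), a ≤ b →
      Ψ₀' a + θ * (b - a) ≤ Ψ₀' b := by
    have hF : ∀ x ∈ Ioo (-1 : ℝ) 1,
        HasDerivAt (fun x => Ψ₀' x - θ * x) (Ψ₀'' x - θ) x := by
      intro x hx
      have hlin : HasDerivAt (fun y : ℝ => θ * y) θ x := by
        simpa using (hasDerivAt_id x).const_mul θ
      exact (hd2 x hx).sub hlin
    have hmono : MonotoneOn (fun x => Ψ₀' x - θ * x) (Icc (-1 + ε) (1 - ε)) := by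
      apply monotoneOn_of_deriv_nonneg (convex_Icc _ _)
      · intro x hx
        exact ((hF x (hsub hx)).continuousAt).continuousWithinAt
      · intro x hx
        rw [interior_Icc] at hx
        exact ((hF x (hsub (Ioo_subset_Icc_self hx))).differentiableAt).differentiableWithinAt
      · intro x hx
        rw [interior_Icc] at hx
        have hx' := hsub (Ioo_subset_Icc_self hx)
        rw [(hF x hx').deriv]
        linarith [hconv x hx']
    intro a ha b hb hab
    have := hmono ha hb hab
    simp only at this
    linarith
  have h0mem : (0 : ℝ) ∈ Icc (-1 + ε) (1 - ε) := ⟨by linarith, by linarith⟩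
  have hg0 : g 0 = Ψ₀' 0 := by
    simp only [hg, regDeriv, if_neg (not_lt.mpr h0mem.1), if_pos h0mem.2]
  -- pointwise comparisons with the tangent line
  have hline_le : ∀ s : ℝ, 0 ≤ s → Ψ₀' 0 + θ * s ≤ g s := by
    intro s hs
    simp only [hg, regDeriv, if_neg (not_lt.mpr (le_trans h0mem.1 hs))]
    rcases le_or_gt s (1 - ε) with h2 | h2
    · rw [if_pos h2]
      simpa using key 0 h0mem s ⟨le_trans h0mem.1 hs, h2⟩ hs
    · rw [if_neg (not_le.mpr h2)]
      have h1e : (1 - ε) ∈ Icc (-1 + ε) (1 - ε) := ⟨hIcc, le_refl _⟩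
      have k1 := key 0 h0mem (1 - ε) h1e (by linarith)
      have k2 := hconv (1 - ε) (hsub h1e)
      nlinarith [k1, k2, h2.le]
  have hle_line : ∀ s : ℝ, s ≤ 0 → g s ≤ Ψ₀' 0 + θ * s := by
    intro s hs
    simp only [hg, regDeriv]
    rcases lt_or_ge s (-1 + ε) with h1 | h1
    · rw [if_pos h1]
      have hae : (-1 + ε) ∈ Icc (-1 + ε) (1 - ε) := ⟨le_refl _, hIcc⟩
      have k1 := key (-1 + ε) hae 0 h0mem h0mem.1
      have k2 := hconv (-1 + ε) (hsub hae)
      nlinarith [k1, k2, h1.le]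
    · rw [if_neg (not_lt.mpr h1), if_pos (le_trans hs h0mem.2)]
      simpa using key s ⟨h1, le_trans hs h0mem.2⟩ 0 h0mem hs
  -- continuity and integrability of g
  have hgc : Continuous g := by
    rw [hg, regDeriv_eq_clamp _ _ _ hIcc]
    have hm : Continuous fun r : ℝ => max (-1 + ε) (min r (1 - ε)) :=
      continuous_const.max (continuous_id.min continuous_const)
    have hmmem : ∀ r : ℝ, max (-1 + ε) (min r (1 - ε)) ∈ Ioo (-1 : ℝ) 1 := by
      intro r
      apply hsub
      constructor
      · exact le_max_left _ _
      · exact max_le hIcc (min_le_right _ _)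
    have hc1 : Continuous fun r : ℝ => Ψ₀' (max (-1 + ε) (min r (1 - ε))) := by
      have : ContinuousOn Ψ₀' (Ioo (-1 : ℝ) 1) := fun x hx =>
        (hd2 x hx).continuousAt.continuousWithinAt
      exact this.comp_continuous hm hmmem
    have hc2 : Continuous fun r : ℝ => Ψ₀'' (max (-1 + ε) (min r (1 - ε))) :=
      hcont.comp_continuous hm hmmem
    exact hc1.add (hc2.mul (continuous_id.sub hm))
  have hgint : ∀ a b : ℝ, IntervalIntegrable g MeasureTheory.volume a b :=
    fun a b => hgc.intervalIntegrable a b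
  have hlint : ∀ a b : ℝ, IntervalIntegrable (fun s => Ψ₀' 0 + θ * s)
      MeasureTheory.volume a b :=
    fun a b => ((by fun_prop : Continuous fun s : ℝ => Ψ₀' 0 + θ * s)).intervalIntegrable a b
  have hlval : ∀ a b : ℝ, (∫ s in a..b, (Ψ₀' 0 + θ * s)) =
      Ψ₀' 0 * (b - a) + θ * ((b ^ 2 - a ^ 2) / 2) := by
    intro a b
    rw [intervalIntegral.integral_add (intervalIntegrable_const)
      ((by fun_prop : Continuous fun s : ℝ => θ * s).intervalIntegrable a b),
      intervalIntegral.integral_const, intervalIntegral.integral_const_mul,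
      integral_id]
    simp [smul_eq_mul, mul_comm]
  have hmain : Ψ₀' 0 * r + θ * (r ^ 2 / 2) ≤ regPot Ψ₀' Ψ₀'' ε r := by
    unfold regPot
    rw [← hg]
    rcases le_or_gt 0 r with hr | hr
    · have := intervalIntegral.integral_mono_on hr (hlint 0 r) (hgint 0 r)
        (fun s hs => hline_le s hs.1)
      rw [hlval 0 r] at this
      calc Ψ₀' 0 * r + θ * (r ^ 2 / 2)
          = Ψ₀' 0 * (r - 0) + θ * ((r ^ 2 - 0 ^ 2) / 2) := by ring
        _ ≤ _ := this
    · have := intervalIntegral.integral_mono_on hr.le (hgint r 0) (hlint r 0)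
        (fun s hs => hle_line s hs.2)
      rw [hlval r 0] at this
      rw [intervalIntegral.integral_symm]
      have : -(Ψ₀' 0 * (0 - r) + θ * ((0 ^ 2 - r ^ 2) / 2)) ≤ -∫ s in r..0, g s := by
        linarith
      calc Ψ₀' 0 * r + θ * (r ^ 2 / 2)
          = -(Ψ₀' 0 * (0 - r) + θ * ((0 ^ 2 - r ^ 2) / 2)) := by ring
        _ ≤ _ := this
  have hfinal : -((Ψ₀' 0) ^ 2 / (2 * θ)) ≤ Ψ₀' 0 * r + θ * (r ^ 2 / 2) := by
    rw [neg_le, ← sub_nonneg]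
    have h1 : 0 ≤ (θ * r + Ψ₀' 0) ^ 2 / (2 * θ) :=
      div_nonneg (sq_nonneg _) (by linarith)
    have h2 : (θ * r + Ψ₀' 0) ^ 2 / (2 * θ) =
        Ψ₀' 0 * r + θ * (r ^ 2 / 2) - -((Ψ₀' 0) ^ 2 / (2 * θ)) := by
      field_simp
      ring
    linarith [h2 ▸ h1]
  linarith
end
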